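/- If every subtree T_i ∈ 𝒯 is a path of T containing at least one edge (so that leaves(T_i) ∈ {1, 2} for every i, hence M ≤ 2), then the greedy solution satisfies |OPT| ≤ 2·|ALG|; that is, the bottom-up greedy algorithm is a 2-approximation for instances consisting of paths, and in particular for the maximum integral multi-commodity flow problem on trees. -/

import Mathlib

/-!
Setting: `G` is a finite tree rooted at `r`. A family `S : Fin n → Finset V` of
vertex sets of subtrees (connected subgraphs) of `G` is given; since connected
subgraphs of a tree are induced, a subtree is faithfully represented by its
vertex set. An *object* of the tree is a vertex or an edge. Capacities are
given by `k`, loads count the subtrees containing an object, feasibility means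
no object is overloaded. The subtrees are indexed so that their roots appear
in nondecreasing order along some post-order (bottom-up) traversal of the tree,
which is encoded by an injective numbering `pos` of the vertices such that
descendants of any vertex `v` appear (contiguously) before `v`.
-/

open Finset

attribute [local instance] Classical.propDecidable

/-- An *object* of a graph on vertex type `V`: a vertex or a (potential) edge. -/
abbrev Object (V : Type) := V ⊕ Sym2 V

/-- The subtree of `G` with vertex set `s` contains the object `o`. -/
def ContainsObj {V : Type} (G : SimpleGraph V) (s : Finset V) : Object V → Prop
  | Sum.inl v => v ∈ s
  | Sum.inr e => e ∈ G.edgeSet ∧ ∀ x ∈ e, x ∈ s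

/-- The load induced by the subfamily `U` on the object `o`. -/
noncomputable def load {V : Type} {n : ℕ} (G : SimpleGraph V) (S : Fin n → Finset V)
    (U : Finset (Fin n)) (o : Object V) : ℕ :=
  (U.filter fun i => ContainsObj G (S i) o).card

/-- A subfamily of subtrees is feasible if it does not overload any object. -/
def Feasible {V : Type} {n : ℕ} (G : SimpleGraph V) (S : Fin n → Finset V)
    (k : Object V → ℕ) (U : Finset (Fin n)) : Prop :=
  ∀ o : Object V, load G S U o ≤ k o

/-- The index set `𝒯_i` of the first `i` subtrees. -/
noncomputable def firstIdx (n i : ℕ) : Finset (Fin n) :=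
  univ.filter fun j => (j : ℕ) < i

/-- `ALG_i`: the greedy solution after the first `i` subtrees have been considered. -/
noncomputable def greedy {V : Type} {n : ℕ} (G : SimpleGraph V) (S : Fin n → Finset V)
    (k : Object V → ℕ) : ℕ → Finset (Fin n)
  | 0 => ∅
  | m + 1 =>
    if h : m < n then
      if Feasible G S k (insert ⟨m, h⟩ (greedy G S k m)) then
        insert ⟨m, h⟩ (greedy G S k m)
      else greedy G S k m
    else greedy G S k m

/-- `v` is an ancestor of `u` in the tree `G` rooted at `r`
(i.e. `v` lies on the unique `r`–`u` path). -/
def IsAnc {V : Type} (G : SimpleGraph V) (r v u : V) : Prop :=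
  G.dist r u = G.dist r v + G.dist v u

/-- The number of leaves of the subtree with vertex set `s` that differ from its root `rt`. -/
noncomputable def leavesCnt {V : Type} [DecidableEq V] (G : SimpleGraph V)
    (s : Finset V) (rt : V) : ℕ :=
  (s.filter fun v => v ≠ rt ∧ (s.filter fun u => G.Adj v u).card ≤ 1).card

/-!
Run alongside the greedy algorithm a feasible solution `W`, initially `OPT`, that agrees with
`ALG_m` on the first `m` paths. When greedy accepts `T_m` but `T_m ∉ W`, every object of `T_m`
saturated by `W` is used by a path of `W` of index `≥ m`. Such a path is rooted no lower than
`T_m`, so if it passes through a vertex `b` of `T_m` it contains everything of `T_m` above `b`.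
As `T_m` is the union of two ancestor chains from its root, the paths through the deepest
saturated vertex of each chain free all of `T_m`: swapping these (at most two) paths for `T_m`
costs `W` at most one element while `ALG` gains one. At the end `W ⊆ ALG`, so
`|OPT| ≤ |W| + |ALG| ≤ 2 |ALG|`.
-/

namespace SimpleGraph

variable {V : Type*} {G : SimpleGraph V} {u v w x y z : V}

lemma Connected.exists_adj_dist_eq_add_one (hG : G.Connected) (h : u ≠ w) :
    ∃ c, G.Adj u c ∧ G.dist u w = G.dist c w + 1 := by
  obtain ⟨p, hp⟩ := hG.exists_walk_length_eq_dist u w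
  cases p with
  | nil => exact absurd rfl h
  | @cons _ c _ hadj q =>
    have hq := dist_le q
    have htri : G.dist u w ≤ G.dist u c + G.dist c w := hG.dist_triangle
    have hd : G.dist u c = 1 := dist_eq_one_iff_adj.2 hadj
    rw [Walk.length_cons] at hp
    exact ⟨c, hadj, by omega⟩

lemma IsTree.length_eq_dist_of_isPath (hT : G.IsTree) {p : G.Walk u v} (hp : p.IsPath) :
    p.length = G.dist u v := by
  obtain ⟨q, hq, hlen⟩ := hT.connected.exists_path_of_dist u v
  rw [(hT.existsUnique_path u v).unique hp hq, hlen]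

lemma IsTree.dist_add_dist_eq_of_mem_support (hT : G.IsTree) {p : G.Walk x z} (hp : p.IsPath)
    (hy : y ∈ p.support) : G.dist x y + G.dist y z = G.dist x z := by
  rw [← hT.length_eq_dist_of_isPath (hp.takeUntil hy),
    ← hT.length_eq_dist_of_isPath (hp.dropUntil hy), ← Walk.length_append, p.take_spec hy,
    hT.length_eq_dist_of_isPath hp]

lemma IsTree.mem_support_of_dist_add_dist_eq (hT : G.IsTree) {p : G.Walk x z} (hp : p.IsPath)
    (h : G.dist x y + G.dist y z = G.dist x z) : y ∈ p.support := by
  obtain ⟨q₁, -, hq₁⟩ := hT.connected.exists_path_of_dist x y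
  obtain ⟨q₂, -, hq₂⟩ := hT.connected.exists_path_of_dist y z
  have hq : (q₁.append q₂).IsPath :=
    Walk.isPath_of_length_eq_dist _ (by rw [Walk.length_append, hq₁, hq₂, h])
  rw [← (hT.existsUnique_path x z).unique hq hp, Walk.mem_support_append_iff]
  exact Or.inl q₁.end_mem_support

lemma IsTree.mem_of_dist_add_dist_eq (hT : G.IsTree) {s : Set V} (hs : (G.induce s).Connected)
    (hx : x ∈ s) (hz : z ∈ s) (h : G.dist x y + G.dist y z = G.dist x z) : y ∈ s := by
  obtain ⟨p⟩ := hs ⟨x, hx⟩ ⟨z, hz⟩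
  have hy := hT.mem_support_of_dist_add_dist_eq (p.map (Embedding.induce s).toHom).bypass_isPath h
  obtain ⟨y', -, rfl⟩ :=
    List.mem_map.1 (Walk.support_map _ _ ▸ Walk.support_bypass_subset_support _ hy)
  exact y'.2

end SimpleGraph

section Ancestor

open SimpleGraph

variable {V : Type} {G : SimpleGraph V} {r u v w x : V}

lemma isAnc_refl (G : SimpleGraph V) (r v : V) : IsAnc G r v v := by
  simp [IsAnc]

lemma IsAnc.dist_eq_add (hG : G.Connected) (h₁ : IsAnc G r u v) (h₂ : IsAnc G r v w) :
    G.dist u w = G.dist u v + G.dist v w := by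
  have t₁ : G.dist u w ≤ G.dist u v + G.dist v w := hG.dist_triangle
  have t₂ : G.dist r w ≤ G.dist r u + G.dist u w := hG.dist_triangle
  unfold IsAnc at h₁ h₂
  omega

lemma IsAnc.trans (hG : G.Connected) (h₁ : IsAnc G r u v) (h₂ : IsAnc G r v w) :
    IsAnc G r u w := by
  have := h₁.dist_eq_add hG h₂
  unfold IsAnc at *
  omega

lemma IsAnc.eq_of_dist_le (hG : G.Connected) (h : IsAnc G r u v)
    (hle : G.dist r v ≤ G.dist r u) : u = v :=
  hG.dist_eq_zero_iff.1 (by unfold IsAnc at h; omega)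

lemma IsAnc.total (hT : G.IsTree) (hu : IsAnc G r u x) (hw : IsAnc G r w x) :
    IsAnc G r u w ∨ IsAnc G r w u := by
  obtain ⟨p, hp, -⟩ := hT.connected.exists_path_of_dist r x
  have hup := hT.mem_support_of_dist_add_dist_eq hp hu.symm
  have hwp := hT.mem_support_of_dist_add_dist_eq hp hw.symm
  rw [← p.take_spec hup, Walk.mem_support_append_iff] at hwp
  rcases hwp with hwp | hwp
  · exact Or.inr (hT.dist_add_dist_eq_of_mem_support (hp.takeUntil hup) hwp).symm
  · have := hT.dist_add_dist_eq_of_mem_support (hp.dropUntil hup) hwp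
    unfold IsAnc at *
    omega

lemma isAnc_or_isAnc_of_adj (hT : G.IsTree) (r : V) (h : G.Adj u v) :
    IsAnc G r u v ∨ IsAnc G r v u := by
  obtain ⟨p, hp, hlen⟩ := hT.connected.exists_path_of_dist r u
  by_cases hv : v ∈ p.support
  · exact Or.inr (hT.dist_add_dist_eq_of_mem_support hp hv).symm
  · left
    have := hT.length_eq_dist_of_isPath (hp.concat hv h)
    rw [Walk.length_concat, hlen] at this
    rw [IsAnc, ← this, dist_eq_one_iff_adj.2 h]

lemma IsAnc.exists_child (hG : G.Connected) (h : IsAnc G r u w) (hne : u ≠ w) :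
    ∃ c, G.Adj u c ∧ IsAnc G r u c ∧ IsAnc G r c w ∧ G.dist r c = G.dist r u + 1 := by
  obtain ⟨c, hadj, hc⟩ := hG.exists_adj_dist_eq_add_one hne
  have hd : G.dist u c = 1 := dist_eq_one_iff_adj.2 hadj
  have t₁ : G.dist r c ≤ G.dist r u + G.dist u c := hG.dist_triangle
  have t₂ : G.dist r w ≤ G.dist r c + G.dist c w := hG.dist_triangle
  refine ⟨c, hadj, ?_, ?_, ?_⟩ <;> unfold IsAnc at * <;> omega

lemma IsAnc.exists_parent (hG : G.Connected) (h : IsAnc G r u w) (hne : u ≠ w) :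
    ∃ q, G.Adj q w ∧ IsAnc G r u q ∧ IsAnc G r q w ∧ G.dist r w = G.dist r q + 1 := by
  obtain ⟨q, hadj, hq⟩ := hG.exists_adj_dist_eq_add_one hne.symm
  have hd : G.dist q w = 1 := dist_eq_one_iff_adj.2 hadj.symm
  have t₁ : G.dist r w ≤ G.dist r q + G.dist q w := hG.dist_triangle
  have t₂ : G.dist r q ≤ G.dist r u + G.dist u q := hG.dist_triangle
  rw [G.dist_comm, G.dist_comm (u := q)] at hq
  refine ⟨q, hadj.symm, ?_, ?_, ?_⟩ <;> unfold IsAnc at * <;> omega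

lemma SimpleGraph.IsTree.mem_of_isAnc_of_isAnc (hT : G.IsTree) {s : Set V}
    (hs : (G.induce s).Connected) (hu : u ∈ s) (hw : w ∈ s) (h₁ : IsAnc G r u v)
    (h₂ : IsAnc G r v w) : v ∈ s :=
  hT.mem_of_dist_add_dist_eq hs hu hw (h₁.dist_eq_add hT.connected h₂).symm

end Ancestor

section RootedSubtree

open SimpleGraph

variable {V : Type} {G : SimpleGraph V} {r t v x y z m : V} {s : Finset V}

structure IsRootedSubtree (G : SimpleGraph V) (r : V) (s : Finset V) (t : V) : Prop where
  connected : (G.induce (s : Set V)).Connected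
  root_mem : t ∈ s
  dist_root_le : ∀ v ∈ s, G.dist r t ≤ G.dist r v

lemma IsRootedSubtree.isAnc (hT : G.IsTree) (hs : IsRootedSubtree G r s t) (hv : v ∈ s) :
    IsAnc G r t v := by
  suffices key : ∀ {u : V} (p : G.Walk u t), (∀ x ∈ p.support, x ∈ s) → IsAnc G r t u by
    obtain ⟨p⟩ := hs.connected ⟨v, hv⟩ ⟨t, hs.root_mem⟩
    refine key (p.map (Embedding.induce _).toHom) fun x hx => ?_
    obtain ⟨x', -, rfl⟩ := List.mem_map.1 (Walk.support_map _ _ ▸ hx)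
    exact x'.2
  intro u p hp
  induction p with
  | nil => exact isAnc_refl G r _
  | @cons u u' _ hadj p ih =>
    have ih := ih hs fun x hx => hp x (List.mem_cons_of_mem _ hx)
    rcases isAnc_or_isAnc_of_adj hT r hadj with hup | hup
    · rcases ih.total hT hup with h | h
      · exact h
      · rw [h.eq_of_dist_le hT.connected (hs.dist_root_le u (hp u (List.mem_cons_self ..)))]
        exact isAnc_refl G r _
    · exact ih.trans hT.connected hup

lemma two_lt_card_filter_adj {a b c : V} (ha : a ∈ s) (hb : b ∈ s) (hc : c ∈ s)
    (hma : G.Adj m a) (hmb : G.Adj m b) (hmc : G.Adj m c)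
    (hab : a ≠ b) (hac : a ≠ c) (hbc : b ≠ c) :
    2 < (s.filter fun u => G.Adj m u).card := by
  have h3 : ({a, b, c} : Finset V).card = 3 := card_eq_three.2 ⟨a, b, c, hab, hac, hbc, rfl⟩
  have hsub : ({a, b, c} : Finset V) ⊆ s.filter fun u => G.Adj m u := by
    simp [insert_subset_iff, *]
  have := card_le_card hsub
  omega

/-- If `m` is a deepest vertex of `s` below which two of `x, y, z` lie, then `m` has three
neighbours in `s`: its children towards `x` and `y`, and either its child towards `z` or its
parent. -/
lemma IsRootedSubtree.false_of_deepest_common_isAnc (hT : G.IsTree)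
    (hs : IsRootedSubtree G r s t) (hdeg : ∀ v ∈ s, (s.filter fun u => G.Adj v u).card ≤ 2)
    (hx : x ∈ s) (hy : y ∈ s) (hz : z ∈ s)
    (hxy : ¬IsAnc G r x y) (hyx : ¬IsAnc G r y x) (hzx : ¬IsAnc G r z x)
    (hm : m ∈ s) (hmx : IsAnc G r m x) (hmy : IsAnc G r m y)
    (hmax : ∀ v ∈ s, IsAnc G r v x ∧ IsAnc G r v y ∨ IsAnc G r v x ∧ IsAnc G r v z ∨
      IsAnc G r v y ∧ IsAnc G r v z → G.dist r v ≤ G.dist r m) : False := by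
  have hG := hT.connected
  have hmem {u v w : V} (hu : u ∈ s) (hw : w ∈ s) (h₁ : IsAnc G r u v) (h₂ : IsAnc G r v w) :
      v ∈ s := hT.mem_of_isAnc_of_isAnc hs.connected hu hw h₁ h₂
  obtain ⟨cx, hcx, hmcx, hcxx, hdcx⟩ := hmx.exists_child hG (by rintro rfl; exact hxy hmy)
  obtain ⟨cy, hcy, hmcy, hcyy, hdcy⟩ := hmy.exists_child hG (by rintro rfl; exact hyx hmx)
  have hcxs := hmem hm hx hmcx hcxx
  have hcys := hmem hm hy hmcy hcyy
  have hcxy : cx ≠ cy := by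
    rintro rfl
    have := hmax cx hcxs (Or.inl ⟨hcxx, hcyy⟩)
    omega
  refine (hdeg m hm).not_gt ?_
  by_cases hmz : IsAnc G r m z
  · obtain ⟨cz, hcz, hmcz, hczz, hdcz⟩ := hmz.exists_child hG (by rintro rfl; exact hzx hmx)
    refine two_lt_card_filter_adj hcxs hcys (hmem hm hz hmcz hczz) hcx hcy hcz hcxy ?_ ?_
    · rintro rfl
      have := hmax cx hcxs (Or.inr (Or.inl ⟨hcxx, hczz⟩))
      omega
    · rintro rfl
      have := hmax cy hcys (Or.inr (Or.inr ⟨hcyy, hczz⟩))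
      omega
  · have htm : t ≠ m := by rintro rfl; exact hmz (hs.isAnc hT hz)
    obtain ⟨q, hq, htq, hqm, hdq⟩ := (hs.isAnc hT hm).exists_parent hG htm
    refine two_lt_card_filter_adj hcxs hcys (hmem hs.root_mem hm htq hqm) hcx hcy hq.symm hcxy
      ?_ ?_ <;> rintro rfl <;> omega

lemma IsRootedSubtree.isAnc_of_three (hT : G.IsTree) (hs : IsRootedSubtree G r s t)
    (hdeg : ∀ v ∈ s, (s.filter fun u => G.Adj v u).card ≤ 2)
    (hx : x ∈ s) (hy : y ∈ s) (hz : z ∈ s) :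
    IsAnc G r x y ∨ IsAnc G r y x ∨ IsAnc G r x z ∨ IsAnc G r z x ∨
      IsAnc G r y z ∨ IsAnc G r z y := by
  by_contra! h
  obtain ⟨hxy, hyx, hxz, hzx, hyz, hzy⟩ := h
  let P v := IsAnc G r v x ∧ IsAnc G r v y ∨ IsAnc G r v x ∧ IsAnc G r v z ∨
    IsAnc G r v y ∧ IsAnc G r v z
  obtain ⟨m, hm, hmax⟩ := (s.filter P).exists_max_image (G.dist r)
    ⟨t, mem_filter.2 ⟨hs.root_mem, Or.inl ⟨hs.isAnc hT hx, hs.isAnc hT hy⟩⟩⟩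
  obtain ⟨hm, hP⟩ := mem_filter.1 hm
  have hmax' : ∀ v ∈ s, P v → G.dist r v ≤ G.dist r m :=
    fun v hv h => hmax v (mem_filter.2 ⟨hv, h⟩)
  rcases hP with ⟨hmx, hmy⟩ | ⟨hmx, hmz⟩ | ⟨hmy, hmz⟩
  · exact hs.false_of_deepest_common_isAnc hT hdeg hx hy hz hxy hyx hzx hm hmx hmy hmax'
  · exact hs.false_of_deepest_common_isAnc hT hdeg hx hz hy hxz hzx hyx hm hmx hmz
      fun v hv h => hmax' v hv (by tauto)
  · exact hs.false_of_deepest_common_isAnc hT hdeg hy hz hx hyz hzy hxy hm hmy hmz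
      fun v hv h => hmax' v hv (by tauto)

lemma IsRootedSubtree.exists_two_chains (hT : G.IsTree) (hs : IsRootedSubtree G r s t)
    (hdeg : ∀ v ∈ s, (s.filter fun u => G.Adj v u).card ≤ 2) {X : Finset V} (hX : X ⊆ s)
    (hne : X.Nonempty) : ∃ a ∈ X, ∃ b ∈ X, ∀ x ∈ X, IsAnc G r x a ∨ IsAnc G r x b := by
  have hG := hT.connected
  obtain ⟨a, ha, hamax⟩ := X.exists_max_image (G.dist r) hne
  by_cases hY : (X.filter fun x => ¬IsAnc G r x a).Nonempty
  · obtain ⟨b, hb, hbmax⟩ := (X.filter fun x => ¬IsAnc G r x a).exists_max_image (G.dist r) hY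
    obtain ⟨hbX, hba⟩ := mem_filter.1 hb
    refine ⟨a, ha, b, hbX, fun x hx => ?_⟩
    by_contra! h
    have hxb := hbmax x (mem_filter.2 ⟨hx, h.1⟩)
    rcases hs.isAnc_of_three hT hdeg (hX ha) (hX hbX) (hX hx) with h' | h' | h' | h' | h' | h'
    · exact hba (h'.eq_of_dist_le hG (hamax b hbX) ▸ isAnc_refl G r a)
    · exact hba h'
    · exact h.1 (h'.eq_of_dist_le hG (hamax x hx) ▸ isAnc_refl G r a)
    · exact h.1 h'
    · exact h.2 (h'.eq_of_dist_le hG hxb ▸ isAnc_refl G r b)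
    · exact h.2 h'
  · refine ⟨a, ha, a, ha, fun x hx => Or.inl ?_⟩
    by_contra h
    exact hY ⟨x, mem_filter.2 ⟨hx, h⟩⟩

end RootedSubtree

section Objects

open SimpleGraph

variable {V : Type} {G : SimpleGraph V} {s s' : Finset V} {o : Object V}

def IsVertexOf : Object V → V → Prop
  | .inl v, x => x = v
  | .inr e, x => x ∈ e

lemma ContainsObj.mem (h : ContainsObj G s o) {x : V} (hx : IsVertexOf o x) : x ∈ s := by
  cases o with
  | inl v => cases hx; exact h
  | inr e => exact h.2 x hx

lemma ContainsObj.of_vertices (h : ContainsObj G s o) (h' : ∀ x, IsVertexOf o x → x ∈ s') :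
    ContainsObj G s' o := by
  cases o with
  | inl v => exact h' v rfl
  | inr e => exact ⟨h.1, h'⟩

lemma ContainsObj.exists_bottom (hT : G.IsTree) (r : V) (h : ContainsObj G s o) :
    ∃ b, IsVertexOf o b ∧ ∀ x, IsVertexOf o x → IsAnc G r x b := by
  cases o with
  | inl v => exact ⟨v, rfl, by rintro x rfl; exact isAnc_refl G r x⟩
  | inr e =>
    induction e using Sym2.ind with
    | _ a b =>
      rcases isAnc_or_isAnc_of_adj hT r h.1 with hab | hba
      · exact ⟨b, Sym2.mem_mk_right a b, fun x hx => by
          rcases Sym2.mem_iff.1 hx with rfl | rfl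
          exacts [hab, isAnc_refl G r x]⟩
      · exact ⟨a, Sym2.mem_mk_left a b, fun x hx => by
          rcases Sym2.mem_iff.1 hx with rfl | rfl
          exacts [isAnc_refl G r x, hba]⟩

end Objects

section Load

variable {V : Type} {n : ℕ} {G : SimpleGraph V} {S : Fin n → Finset V} {k : Object V → ℕ}
  {A U W D : Finset (Fin n)} {i : Fin n} {o : Object V}

lemma load_mono (h : U ⊆ W) (o : Object V) : load G S U o ≤ load G S W o :=
  card_le_card (filter_subset_filter _ h)

lemma Feasible.mono (hW : Feasible G S k W) (h : U ⊆ W) : Feasible G S k U :=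
  fun o => (load_mono h o).trans (hW o)

lemma load_pos_iff : 0 < load G S U o ↔ ∃ j ∈ U, ContainsObj G (S j) o := by
  simp [load, card_pos, Finset.Nonempty]

lemma load_insert_of_containsObj (hi : i ∉ U) (ho : ContainsObj G (S i) o) :
    load G S (insert i U) o = load G S U o + 1 := by
  rw [load, filter_insert, if_pos ho, card_insert_of_notMem fun h => hi (mem_filter.1 h).1, load]

lemma load_insert_of_not_containsObj (ho : ¬ContainsObj G (S i) o) :
    load G S (insert i U) o = load G S U o := by
  rw [load, filter_insert, if_neg ho, load]

lemma load_sdiff_add_load (h : D ⊆ W) (o : Object V) :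
    load G S (W \ D) o + load G S D o = load G S W o := by
  rw [load, load, load, ← card_union_of_disjoint (disjoint_filter_filter sdiff_disjoint),
    ← filter_union, sdiff_union_of_subset h]

lemma exists_mem_sdiff_containsObj (hAW : A ⊆ W) (hi : i ∉ A)
    (hA : Feasible G S k (insert i A)) (ho : ContainsObj G (S i) o) (hsat : k o ≤ load G S W o) :
    ∃ j ∈ W \ A, ContainsObj G (S j) o := by
  have h₁ := hA o
  have h₂ := load_sdiff_add_load (G := G) (S := S) hAW o
  rw [load_insert_of_containsObj hi ho] at h₁
  exact load_pos_iff.1 (by omega)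

lemma Feasible.insert_sdiff (hW : Feasible G S k W) (hi : i ∉ W) (hD : D ⊆ W)
    (hcov : ∀ o, ContainsObj G (S i) o → k o ≤ load G S W o → ∃ j ∈ D, ContainsObj G (S j) o) :
    Feasible G S k (insert i (W \ D)) := by
  intro o
  have hsplit := load_sdiff_add_load (G := G) (S := S) hD o
  have hWo := hW o
  by_cases ho : ContainsObj G (S i) o
  · rw [load_insert_of_containsObj (fun h => hi (mem_sdiff.1 h).1) ho]
    by_cases hsat : k o ≤ load G S W o
    · have := load_pos_iff.2 (hcov o ho hsat)
      omega
    · omega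
  · rw [load_insert_of_not_containsObj ho]
    omega

end Load

section Greedy

variable {V : Type} {n : ℕ} {G : SimpleGraph V} {S : Fin n → Finset V} {k : Object V → ℕ}
  {m : ℕ} {W : Finset (Fin n)}

lemma greedy_succ (hm : m < n) :
    greedy G S k (m + 1) =
      if Feasible G S k (insert ⟨m, hm⟩ (greedy G S k m)) then insert ⟨m, hm⟩ (greedy G S k m)
      else greedy G S k m := by
  rw [greedy, dif_pos hm]

lemma greedy_subset_succ (m : ℕ) : greedy G S k m ⊆ greedy G S k (m + 1) := by
  rw [greedy]
  split_ifs <;> simp [subset_insert]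

lemma lt_of_mem_greedy {j : Fin n} (hj : j ∈ greedy G S k m) : (j : ℕ) < m := by
  induction m with
  | zero => simp [greedy] at hj
  | succ m ih =>
    rw [greedy] at hj
    split_ifs at hj
    · rcases mem_insert.1 hj with rfl | hj
      exacts [Nat.lt_succ_self m, Nat.lt_succ_of_lt (ih hj)]
    all_goals exact Nat.lt_succ_of_lt (ih hj)

/-- `W` is a feasible solution that agrees with `ALG_m` on `𝒯_m`. -/
structure IsGreedyExtension (G : SimpleGraph V) (S : Fin n → Finset V) (k : Object V → ℕ)
    (m : ℕ) (W : Finset (Fin n)) : Prop where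
  feasible : Feasible G S k W
  greedy_subset : greedy G S k m ⊆ W
  le_of_mem_sdiff : ∀ j ∈ W \ greedy G S k m, m ≤ j

lemma IsGreedyExtension.succ (h : IsGreedyExtension G S k m W)
    (hsub : greedy G S k (m + 1) ⊆ W) (hm : ∀ j ∈ W, (j : ℕ) = m → j ∈ greedy G S k (m + 1)) :
    IsGreedyExtension G S k (m + 1) W := by
  refine ⟨h.feasible, hsub, fun j hj => ?_⟩
  obtain ⟨hjW, hj⟩ := mem_sdiff.1 hj
  have := h.le_of_mem_sdiff j (mem_sdiff.2 ⟨hjW, fun h => hj (greedy_subset_succ m h)⟩)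
  have : (j : ℕ) ≠ m := fun h => hj (hm j hjW h)
  omega

lemma IsGreedyExtension.subset_greedy (h : IsGreedyExtension G S k n W) : W ⊆ greedy G S k n := by
  intro j hj
  by_contra hjg
  have := h.le_of_mem_sdiff j (mem_sdiff.2 ⟨hj, hjg⟩)
  omega

end Greedy

section Exchange

open SimpleGraph

variable {V : Type} {n : ℕ} {G : SimpleGraph V} {r : V} {S : Fin n → Finset V} {rt : Fin n → V}
  {k : Object V → ℕ} {m : ℕ} {A U W D : Finset (Fin n)} {i : Fin n}

lemma containsObj_of_forall_isAnc (hT : G.IsTree) {s s' : Finset V} {t t' b : V}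
    (hs : IsRootedSubtree G r s t) (hs' : IsRootedSubtree G r s' t')
    (htt' : IsAnc G r t t' → t = t') (hb : b ∈ s) (hb' : b ∈ s') {o : Object V}
    (ho : ContainsObj G s o) (hob : ∀ x, IsVertexOf o x → IsAnc G r x b) :
    ContainsObj G s' o := by
  have ht't : IsAnc G r t' t := by
    rcases (hs.isAnc hT hb).total hT (hs'.isAnc hT hb') with h | h
    · exact htt' h ▸ isAnc_refl G r t
    · exact h
  exact ho.of_vertices fun x hx => hT.mem_of_isAnc_of_isAnc hs'.connected hs'.root_mem hb'
    (ht't.trans hT.connected (hs.isAnc hT (ho.mem hx))) (hob x hx)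

lemma exists_exchange (hT : G.IsTree) (hS : ∀ j, IsRootedSubtree G r (S j) (rt j))
    (hdeg : ∀ v ∈ S i, ((S i).filter fun u => G.Adj v u).card ≤ 2)
    (hbottomUp : ∀ j, i ≤ j → IsAnc G r (rt i) (rt j) → rt i = rt j)
    (hW : Feasible G S k W) (hAW : A ⊆ W) (hlater : ∀ j ∈ W \ A, i ≤ j) (hiW : i ∉ W)
    (hA : Feasible G S k (insert i A)) :
    ∃ D ⊆ W \ A, D.card ≤ 2 ∧ Feasible G S k (insert i (W \ D)) := by
  let X := (S i).filter fun x => ∃ o, ContainsObj G (S i) o ∧ k o ≤ load G S W o ∧ IsVertexOf o x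
  have hbottom : ∀ o, ContainsObj G (S i) o → k o ≤ load G S W o →
      ∃ c ∈ X, ∀ x, IsVertexOf o x → IsAnc G r x c := by
    intro o ho hsat
    obtain ⟨c, hc, hoc⟩ := ho.exists_bottom hT r
    exact ⟨c, mem_filter.2 ⟨ho.mem hc, o, ho, hsat, hc⟩, hoc⟩
  have hcover : ∀ a ∈ X, ∃ j ∈ W \ A, ∀ o, ContainsObj G (S i) o →
      (∀ x, IsVertexOf o x → IsAnc G r x a) → ContainsObj G (S j) o := by
    intro a ha
    obtain ⟨ha, o, ho, hsat, hoa⟩ := mem_filter.1 ha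
    obtain ⟨j, hj, hjo⟩ := exists_mem_sdiff_containsObj hAW (fun h => hiW (hAW h)) hA ho hsat
    exact ⟨j, hj, fun o' ho' => containsObj_of_forall_isAnc hT (hS i) (hS j)
      (hbottomUp j (hlater j hj)) ha (hjo.mem hoa) ho'⟩
  rcases X.eq_empty_or_nonempty with hX | hX
  · refine ⟨∅, empty_subset _, by simp, hW.insert_sdiff hiW (empty_subset _) fun o ho hsat => ?_⟩
    obtain ⟨c, hc, -⟩ := hbottom o ho hsat
    simp [hX] at hc
  · obtain ⟨a, ha, b, hb, hab⟩ := (hS i).exists_two_chains hT hdeg (filter_subset _ _) hX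
    obtain ⟨ja, hja, hja'⟩ := hcover a ha
    obtain ⟨jb, hjb, hjb'⟩ := hcover b hb
    have hD : {ja, jb} ⊆ W \ A := insert_subset hja (singleton_subset_iff.2 hjb)
    refine ⟨{ja, jb}, hD, card_le_two, hW.insert_sdiff hiW (hD.trans sdiff_subset) ?_⟩
    intro o ho hsat
    obtain ⟨c, hc, hoc⟩ := hbottom o ho hsat
    rcases hab c hc with hca | hcb
    · exact ⟨ja, mem_insert_self _ _, hja' o ho fun x hx => (hoc x hx).trans hT.connected hca⟩
    · exact ⟨jb, mem_insert_of_mem (mem_singleton_self _),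
        hjb' o ho fun x hx => (hoc x hx).trans hT.connected hcb⟩

lemma IsGreedyExtension.insert_sdiff (h : IsGreedyExtension G S k m W) (hm : m < n)
    (hD : D ⊆ W \ greedy G S k m) (hfeas : Feasible G S k (insert ⟨m, hm⟩ (W \ D))) :
    IsGreedyExtension G S k m (insert ⟨m, hm⟩ (W \ D)) := by
  refine ⟨hfeas, fun j hj => mem_insert_of_mem (mem_sdiff.2 ⟨h.greedy_subset hj,
    fun hjD => (mem_sdiff.1 (hD hjD)).2 hj⟩), fun j hj => ?_⟩
  obtain ⟨hj, hjg⟩ := mem_sdiff.1 hj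
  rcases mem_insert.1 hj with rfl | hj
  · exact le_rfl
  · exact h.le_of_mem_sdiff j (mem_sdiff.2 ⟨(mem_sdiff.1 hj).1, hjg⟩)

lemma IsGreedyExtension.exists_succ (hT : G.IsTree) (hS : ∀ j, IsRootedSubtree G r (S j) (rt j))
    (hdeg : ∀ i, ∀ v ∈ S i, ((S i).filter fun u => G.Adj v u).card ≤ 2)
    (hbottomUp : ∀ i j, i ≤ j → IsAnc G r (rt i) (rt j) → rt i = rt j)
    (h : IsGreedyExtension G S k m W) (hm : m < n) :
    ∃ W', IsGreedyExtension G S k (m + 1) W' ∧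
      W.card + (greedy G S k m).card ≤ W'.card + (greedy G S k (m + 1)).card := by
  set i : Fin n := ⟨m, hm⟩
  have hi : ∀ j : Fin n, (j : ℕ) = m → j = i := fun j hj => Fin.ext hj
  have hiA : i ∉ greedy G S k m := fun h => (lt_of_mem_greedy h).false
  by_cases hacc : Feasible G S k (insert i (greedy G S k m))
  · have hg : greedy G S k (m + 1) = insert i (greedy G S k m) := by
      rw [greedy_succ hm, if_pos hacc]
    have hgi : i ∈ greedy G S k (m + 1) := hg ▸ mem_insert_self _ _
    have hcard : (greedy G S k (m + 1)).card = (greedy G S k m).card + 1 := by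
      rw [hg, card_insert_of_notMem hiA]
    by_cases hiW : i ∈ W
    · exact ⟨W, h.succ (hg ▸ insert_subset hiW h.greedy_subset) fun j _ hj => hi j hj ▸ hgi,
        by omega⟩
    obtain ⟨D, hD, hDcard, hfeas⟩ := exists_exchange hT hS (hdeg i) (hbottomUp i) h.feasible
      h.greedy_subset h.le_of_mem_sdiff hiW hacc
    have hW' := h.insert_sdiff hm hD hfeas
    refine ⟨_, hW'.succ (hg ▸ insert_subset (mem_insert_self _ _) hW'.greedy_subset)
      fun j _ hj => hi j hj ▸ hgi, ?_⟩
    have hDW : D ⊆ W := hD.trans sdiff_subset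
    have := card_le_card hDW
    rw [card_insert_of_notMem fun h => hiW (mem_sdiff.1 h).1, card_sdiff_of_subset hDW]
    omega
  · have hg : greedy G S k (m + 1) = greedy G S k m := by rw [greedy_succ hm, if_neg hacc]
    have hiW : i ∉ W := fun hiW => hacc (h.feasible.mono (insert_subset hiW h.greedy_subset))
    exact ⟨W, h.succ (hg ▸ h.greedy_subset) fun j hjW hj => absurd (hi j hj ▸ hjW) hiW, by rw [hg]⟩

lemma exists_isGreedyExtension (hT : G.IsTree) (hS : ∀ j, IsRootedSubtree G r (S j) (rt j))
    (hdeg : ∀ i, ∀ v ∈ S i, ((S i).filter fun u => G.Adj v u).card ≤ 2)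
    (hbottomUp : ∀ i j, i ≤ j → IsAnc G r (rt i) (rt j) → rt i = rt j)
    (hU : Feasible G S k U) (m : ℕ) (hm : m ≤ n) :
    ∃ W, IsGreedyExtension G S k m W ∧ U.card ≤ W.card + (greedy G S k m).card := by
  induction m with
  | zero => exact ⟨U, ⟨hU, by simp [greedy], by simp [greedy]⟩, by simp [greedy]⟩
  | succ m ih =>
    obtain ⟨W, hW, hcard⟩ := ih (by omega)
    obtain ⟨W', hW', hcard'⟩ := hW.exists_succ hT hS hdeg hbottomUp hm
    exact ⟨W', hW', hcard.trans hcard'⟩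

end Exchange

theorem statement4_general
    {V : Type} (G : SimpleGraph V)
    (hTree : G.IsTree) (r : V)
    {n : ℕ} (S : Fin n → Finset V)
    -- each `S i` is (the vertex set of) a subtree, i.e. a connected subgraph of `G`
    (hsub : ∀ i, (G.induce (S i : Set V)).Connected)
    -- every subtree is a path containing at least one edge:
    -- it has at least two vertices, and within it every vertex has degree at most two
    (hdeg : ∀ i, ∀ v ∈ S i, ((S i).filter fun u => G.Adj v u).card ≤ 2)
    -- `rt i` is the vertex of the subtree `S i` closest to the root `r`
    (rt : Fin n → V) (hrtmem : ∀ i, rt i ∈ S i)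
    (hrtmin : ∀ i, ∀ v ∈ S i, G.dist r (rt i) ≤ G.dist r v)
    -- `pos` is a post-order (bottom-up) traversal of the tree ...
    (pos : V → ℕ) (hposinj : Function.Injective pos)
    (hpost : ∀ u v : V, IsAnc G r v u → pos u ≤ pos v)
    -- ... along which the roots of the subtrees appear in nondecreasing order
    (hord : ∀ i j : Fin n, i ≤ j → pos (rt i) ≤ pos (rt j))
    (k : Object V → ℕ)
    -- `OPT` is a feasible subset of maximum cardinality
    (OPT : Finset (Fin n)) (hOPTfeas : Feasible G S k OPT) :
    OPT.card ≤ 2 * (greedy G S k n).card := by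
  have hS : ∀ i, IsRootedSubtree G r (S i) (rt i) := fun i => ⟨hsub i, hrtmem i, hrtmin i⟩
  have hbottomUp : ∀ i j, i ≤ j → IsAnc G r (rt i) (rt j) → rt i = rt j :=
    fun i j hij h => hposinj (le_antisymm (hord i j hij) (hpost _ _ h))
  obtain ⟨W, hW, hcard⟩ :=
    exists_isGreedyExtension hTree hS hdeg hbottomUp hOPTfeas n le_rfl
  have := card_le_card hW.subset_greedy
  omega

/-- **Theorem (2-approximation for paths).** If every subtree is a path of the tree
containing at least one edge (so it has at least two vertices and every vertex has
degree at most 2 within it), then the greedy solution satisfies `|OPT| ≤ 2·|ALG|`. -/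
theorem statement4
    {V : Type} [Fintype V] [DecidableEq V] (G : SimpleGraph V)
    (hTree : G.IsTree) (r : V)
    {n : ℕ} (S : Fin n → Finset V)
    -- each `S i` is (the vertex set of) a subtree, i.e. a connected subgraph of `G`
    (hsub : ∀ i, (G.induce (S i : Set V)).Connected)
    -- every subtree is a path containing at least one edge:
    -- it has at least two vertices, and within it every vertex has degree at most two
    (hcard : ∀ i, 2 ≤ (S i).card)
    (hdeg : ∀ i, ∀ v ∈ S i, ((S i).filter fun u => G.Adj v u).card ≤ 2)
    -- `rt i` is the vertex of the subtree `S i` closest to the root `r`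
    (rt : Fin n → V) (hrtmem : ∀ i, rt i ∈ S i)
    (hrtmin : ∀ i, ∀ v ∈ S i, G.dist r (rt i) ≤ G.dist r v)
    -- `pos` is a post-order (bottom-up) traversal of the tree ...
    (pos : V → ℕ) (hposinj : Function.Injective pos)
    (hpost : ∀ u v : V, IsAnc G r v u → pos u ≤ pos v)
    (hcontig : ∀ u x v : V, IsAnc G r v u → pos u ≤ pos x → pos x ≤ pos v → IsAnc G r v x)
    -- ... along which the roots of the subtrees appear in nondecreasing order
    (hord : ∀ i j : Fin n, i ≤ j → pos (rt i) ≤ pos (rt j))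
    (k : Object V → ℕ)
    -- `OPT` is a feasible subset of maximum cardinality
    (OPT : Finset (Fin n)) (hOPTfeas : Feasible G S k OPT)
    (hOPTmax : ∀ U : Finset (Fin n), Feasible G S k U → U.card ≤ OPT.card) :
    OPT.card ≤ 2 * (greedy G S k n).card :=
  statement4_general G hTree r S hsub hdeg rt hrtmem hrtmin pos hposinj hpost hord k OPT hOPTfeas
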